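/- Under Conditions R, for every s ∈ (0,1] and every θ ∈ Θ, the matrix B_n := I(θ̄_N) + k^{-1/2} ∫_0^1 Δ̇_k(θ + v(θ̄_N − θ), X^k_N) dv converges to the zero matrix in P_θ-probability as n → ∞, where k = ⌊sn⌋ and Δ̇_k(ϑ, X^k_N) = k^{-1/2} Σ_{j=N+1}^k ℓ̈(ϑ, X_{j-1}, X_j) is the θ-derivative of the score increment Δ_k. -/

import Mathlib

/-!
Write `u = θ̄_N - θ` and `G ϑ = k⁻¹ ∑_{m=N+1}^k ℓ̈(ϑ, X_{m-1}, X_m)`, so that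
`B_n = (I(θ̄_N) - I(θ)) + ∫₀¹ (G(θ + v u) - G θ) dv + (G θ + I(θ))`.
While `θ̄_N` stays in a ball around `θ` inside `Θ`, the Lipschitz bound (R5) and the mean value
theorem bound the first two terms by `‖u‖ (L + d k⁻¹ ∑ R₃)`. The factor `‖u‖` tends to `0` in
probability because `√N ‖u‖` is tight (R2), and the second factor is tight by Markov's inequality
and the moment bound of (R3). With `T_n = ∑_{m ≤ n} (ℓ̈(θ, X_{m-1}, X_m) + I(θ))`, the last term
equals `k⁻¹ T_k - k⁻¹ T_N + (N / k) I(θ)`; it vanishes since `n^{-1/2} T_n` is tight (R4) and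
`N / k ≍ n^{δ - 1} → 0`.
-/

open MeasureTheory ProbabilityTheory Filter Topology Matrix

/-- The covector (bounded linear functional) on `Fin d → ℝ` associated to a vector. -/
noncomputable def covec {d : ℕ} (v : Fin d → ℝ) : (Fin d → ℝ) →L[ℝ] ℝ :=
  ∑ i, v i • ContinuousLinearMap.proj i

/-- The standard Gaussian measure on `Fin d → ℝ`. -/
noncomputable def stdGaussianPi (d : ℕ) : Measure (Fin d → ℝ) :=
  Measure.pi fun _ => gaussianReal 0 1

open scoped Classical in
/-- The centered Gaussian measure on `Fin d → ℝ` with covariance matrix `C`. -/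
noncomputable def gaussianVec {d : ℕ} (C : Matrix (Fin d) (Fin d) ℝ) : Measure (Fin d → ℝ) :=
  if h : C.PosSemidef then (stdGaussianPi d).map (fun z => (h.1.eigenvectorUnitary.1 * diagonal (Real.sqrt ∘ h.1.eigenvalues) *
    (star h.1.eigenvectorUnitary : Matrix (Fin d) (Fin d) ℝ)).mulVec z) else 0

/-- Convergence in distribution (weak convergence of laws). -/
def WeakLim {Ω : Type*} [MeasurableSpace Ω] {E : Type*} [TopologicalSpace E] [MeasurableSpace E]
    (P : Measure Ω) (Z : ℕ → Ω → E) (μ : Measure E) : Prop :=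
  ∀ f : BoundedContinuousFunction E ℝ,
    Tendsto (fun n => ∫ ω, f (Z n ω) ∂P) atTop (𝓝 (∫ x, f x ∂μ))

theorem tendsto_natFloor_rpow_div_natFloor_mul {δ s : ℝ} (hδ : δ < 1) (hs : 0 < s) :
    Tendsto (fun n : ℕ => (⌊(n : ℝ) ^ δ⌋₊ : ℝ) / ⌊s * n⌋₊) atTop (𝓝 0) := by
  have hsn : Tendsto (fun n : ℕ => s * n) atTop atTop :=
    tendsto_natCast_atTop_atTop.const_mul_atTop hs
  have hbound : Tendsto (fun n : ℕ => 2 / s * (n : ℝ) ^ (-(1 - δ))) atTop (𝓝 0) := by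
    have h := ((tendsto_rpow_neg_atTop (by linarith : 0 < 1 - δ)).comp
      tendsto_natCast_atTop_atTop).const_mul (2 / s)
    rwa [mul_zero] at h
  refine squeeze_zero' (Eventually.of_forall fun n => by positivity) ?_ hbound
  filter_upwards [hsn.eventually_ge_atTop 2, eventually_gt_atTop 0] with n hn hn0
  have hn0' : (0 : ℝ) < n := by exact_mod_cast hn0
  have hk : s * n / 2 ≤ ⌊s * n⌋₊ := by linarith [Nat.sub_one_lt_floor (s * n)]
  calc (⌊(n : ℝ) ^ δ⌋₊ : ℝ) / ⌊s * n⌋₊ ≤ (n : ℝ) ^ δ / (s * n / 2) :=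
        div_le_div₀ (by positivity) (Nat.floor_le (by positivity)) (by positivity) hk
    _ = 2 / s * (n : ℝ) ^ (-(1 - δ)) := by
        rw [neg_sub, Real.rpow_sub hn0', Real.rpow_one]
        field_simp

theorem inv_mul_sum_Icc_add_eq (x : ℕ → ℝ) (b : ℝ) {N k : ℕ} (hNk : N ≤ k) (hk : k ≠ 0) :
    (k : ℝ)⁻¹ * ∑ m ∈ Finset.Icc (N + 1) k, x m + b =
      (k : ℝ)⁻¹ * ∑ m ∈ Finset.Icc 1 k, (x m + b) -
        (k : ℝ)⁻¹ * ∑ m ∈ Finset.Icc 1 N, (x m + b) + N / k * b := by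
  have hsplit : ∑ m ∈ Finset.Icc 1 N, (x m + b) + ∑ m ∈ Finset.Icc (N + 1) k, (x m + b) =
      ∑ m ∈ Finset.Icc 1 k, (x m + b) := by
    simpa only [← Finset.Icc_add_one_left_eq_Ioc, zero_add] using
      Finset.sum_Ioc_consecutive (fun m => x m + b) (Nat.zero_le N) hNk
  rw [← hsplit]
  simp only [Finset.sum_add_distrib, Finset.sum_const, Nat.card_Icc, nsmul_eq_mul,
    Nat.add_sub_cancel, Nat.add_sub_add_right, Nat.cast_sub hNk]
  field_simp
  ring

theorem norm_covec_le {d : ℕ} (w : Fin d → ℝ) : ‖covec w‖ ≤ d * ‖w‖ := by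
  refine ContinuousLinearMap.opNorm_le_bound _ (by positivity) fun x => ?_
  calc ‖covec w x‖ = |∑ i, w i * x i| := by simp [covec]
    _ ≤ ∑ _i : Fin d, ‖w‖ * ‖x‖ := (Finset.abs_sum_le_sum_abs _ _).trans <|
        Finset.sum_le_sum fun i _ => by
          rw [abs_mul]
          exact mul_le_mul (norm_le_pi_norm w i) (norm_le_pi_norm x i) (abs_nonneg _)
            (norm_nonneg _)
    _ = d * ‖w‖ * ‖x‖ := by simp [mul_assoc]

theorem abs_integral_segment_sub_le {E : Type*} [NormedAddCommGroup E] [NormedSpace ℝ E]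
    {s : Set E} (hs : Convex ℝ s) {G : E → ℝ} {G' : E → E →L[ℝ] ℝ} {C : ℝ}
    (hG : ∀ x ∈ s, HasFDerivAt G (G' x) x) (hG' : ∀ x ∈ s, ‖G' x‖ ≤ C) {x y : E}
    (hx : x ∈ s) (hy : y ∈ s) :
    |(∫ v in (0 : ℝ)..1, G (x + v • (y - x))) - G x| ≤ C * ‖y - x‖ := by
  have hseg : ∀ v ∈ Set.Icc (0 : ℝ) 1, x + v • (y - x) ∈ s := fun v hv =>
    hs.add_smul_sub_mem hx hy hv
  have hint : IntervalIntegrable (fun v : ℝ => G (x + v • (y - x))) volume 0 1 := by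
    refine ContinuousOn.intervalIntegrable fun v hv => ?_
    rw [Set.uIcc_of_le zero_le_one] at hv
    exact ((hG _ (hseg v hv)).continuousAt.comp (f := fun v : ℝ => x + v • (y - x))
      (by fun_prop)).continuousWithinAt
  have hC : 0 ≤ C := (norm_nonneg _).trans (hG' x hx)
  calc |(∫ v in (0 : ℝ)..1, G (x + v • (y - x))) - G x|
      = ‖∫ v in (0 : ℝ)..1, (G (x + v • (y - x)) - G x)‖ := by
        rw [intervalIntegral.integral_sub hint intervalIntegrable_const, Real.norm_eq_abs]
        simp
    _ ≤ C * ‖y - x‖ * |1 - 0| := intervalIntegral.norm_integral_le_of_norm_le_const fun v hv => ?_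
    _ = C * ‖y - x‖ := by simp
  rw [Set.uIoc_of_le zero_le_one] at hv
  have hv' : v ∈ Set.Icc (0 : ℝ) 1 := Set.Ioc_subset_Icc_self hv
  calc ‖G (x + v • (y - x)) - G x‖ ≤ C * ‖x + v • (y - x) - x‖ :=
        hs.norm_image_sub_le_of_norm_hasFDerivWithin_le (fun z hz => (hG z hz).hasFDerivWithinAt)
          hG' hx (hseg v hv')
    _ ≤ C * ‖y - x‖ := by
        rw [add_sub_cancel_left, norm_smul, Real.norm_of_nonneg hv'.1]
        exact mul_le_mul_of_nonneg_left (mul_le_of_le_one_left (norm_nonneg _) hv'.2) hC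

theorem abs_add_integral_avg_segment_le {d : ℕ} {s : Set (Fin d → ℝ)} (hs : Convex ℝ s)
    {F : (Fin d → ℝ) → ℕ → ℝ} {F' : (Fin d → ℝ) → ℕ → Fin d → ℝ} {R : ℕ → ℝ}
    (hF : ∀ ϑ ∈ s, ∀ m, HasFDerivAt (fun ϑ => F ϑ m) (covec (F' ϑ m)) ϑ)
    (hR : ∀ ϑ ∈ s, ∀ m, ‖F' ϑ m‖ ≤ R m) {I : (Fin d → ℝ) → ℝ} {L : ℝ} {θ θ' : Fin d → ℝ}
    (hθ : θ ∈ s) (hθ' : θ' ∈ s) (hI : |I θ' - I θ| ≤ L * ‖θ' - θ‖) (k : ℕ) (A : Finset ℕ) :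
    |I θ' + ∫ v in (0 : ℝ)..1, (k : ℝ)⁻¹ * ∑ m ∈ A, F (θ + v • (θ' - θ)) m| ≤
      ‖θ' - θ‖ * (|L| + d * ((k : ℝ)⁻¹ * ∑ m ∈ A, R m)) +
        |(k : ℝ)⁻¹ * ∑ m ∈ A, F θ m + I θ| := by
  set G : (Fin d → ℝ) → ℝ := fun ϑ => (k : ℝ)⁻¹ * ∑ m ∈ A, F ϑ m
  have hG : ∀ ϑ ∈ s, HasFDerivAt G ((k : ℝ)⁻¹ • ∑ m ∈ A, covec (F' ϑ m)) ϑ := fun ϑ hϑ =>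
    (HasFDerivAt.fun_sum fun m _ => hF ϑ hϑ m).const_mul _
  have hG' : ∀ ϑ ∈ s,
      ‖(k : ℝ)⁻¹ • ∑ m ∈ A, covec (F' ϑ m)‖ ≤ d * ((k : ℝ)⁻¹ * ∑ m ∈ A, R m) := fun ϑ hϑ => calc
    ‖(k : ℝ)⁻¹ • ∑ m ∈ A, covec (F' ϑ m)‖ ≤ (k : ℝ)⁻¹ * ∑ m ∈ A, ‖covec (F' ϑ m)‖ := by
      rw [norm_smul, Real.norm_of_nonneg (by positivity)]
      gcongr
      exact norm_sum_le _ _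
    _ ≤ (k : ℝ)⁻¹ * ∑ m ∈ A, d * R m := by
      gcongr with m
      exact (norm_covec_le _).trans (by gcongr; exact hR ϑ hϑ m)
    _ = d * ((k : ℝ)⁻¹ * ∑ m ∈ A, R m) := by rw [← Finset.mul_sum]; ring
  have hseg := abs_integral_segment_sub_le hs hG hG' hθ hθ'
  have hL : L * ‖θ' - θ‖ ≤ |L| * ‖θ' - θ‖ := by gcongr; exact le_abs_self L
  calc |I θ' + ∫ v in (0 : ℝ)..1, (k : ℝ)⁻¹ * ∑ m ∈ A, F (θ + v • (θ' - θ)) m|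
      = |(I θ' - I θ) + ((∫ v in (0 : ℝ)..1, G (θ + v • (θ' - θ))) - G θ) + (G θ + I θ)| := by
        simp only [G]
        ring_nf
    _ ≤ |I θ' - I θ| + |(∫ v in (0 : ℝ)..1, G (θ + v • (θ' - θ))) - G θ| + |G θ + I θ| :=
        abs_add_three _ _ _
    _ ≤ _ := by linarith

namespace MeasureTheory

variable {Ω ι : Type*} {mΩ : MeasurableSpace Ω} {μ : Measure Ω} {l : Filter ι}

/-- The paper's tightness of a family of random variables: `Z = O_P(1)` uniformly in the index. -/
def BoundedInProbability (μ : Measure Ω) (Z : ι → Ω → ℝ) : Prop :=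
  ∀ ε > (0 : ℝ), ∃ C, ∀ i, μ {ω | C < |Z i ω|} ≤ ENNReal.ofReal ε

theorem BoundedInProbability.comp {κ : Type*} {Z : ι → Ω → ℝ} (hZ : BoundedInProbability μ Z)
    (k : κ → ι) : BoundedInProbability μ (fun j => Z (k j)) :=
  fun ε hε => (hZ ε hε).imp fun _ hC j => hC (k j)

theorem BoundedInProbability.const_add_mul {Z : ι → Ω → ℝ} (hZ : BoundedInProbability μ Z)
    (a b : ℝ) : BoundedInProbability μ (fun i ω => a + b * Z i ω) := by
  intro ε hε
  obtain ⟨C, hC⟩ := hZ ε hε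
  refine ⟨|a| + |b| * C, fun i => (measure_mono fun ω hω => ?_).trans (hC i)⟩
  simp only [Set.mem_ofPred_eq] at hω ⊢
  by_contra! hle
  have : |a + b * Z i ω| ≤ |a| + |b| * C := calc
    |a + b * Z i ω| ≤ |a| + |b| * |Z i ω| := (abs_add_le _ _).trans_eq (by rw [abs_mul])
    _ ≤ |a| + |b| * C := by gcongr
  linarith

theorem boundedInProbability_of_integral_le [IsFiniteMeasure μ] {Z : ι → Ω → ℝ} {C : ℝ}
    (hZ : ∀ i, Integrable (Z i) μ) (hZ0 : ∀ i ω, 0 ≤ Z i ω) (hC : ∀ i, ∫ ω, Z i ω ∂μ ≤ C) :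
    BoundedInProbability μ Z := by
  intro ε hε
  set M := (|C| + 1) / ε
  have hM : 0 < M := by positivity
  refine ⟨M, fun i => ?_⟩
  have hmarkov : M * μ.real {ω | M ≤ Z i ω} ≤ M * ε := calc
    M * μ.real {ω | M ≤ Z i ω} ≤ C :=
      (mul_meas_ge_le_integral_of_nonneg (Eventually.of_forall (hZ0 i)) (hZ i) M).trans (hC i)
    _ ≤ M * ε := by rw [div_mul_cancel₀ _ hε.ne']; linarith [le_abs_self C]
  calc μ {ω | M < |Z i ω|} ≤ μ {ω | M ≤ Z i ω} := measure_mono fun ω hω => by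
        simp only [Set.mem_ofPred_eq, abs_of_nonneg (hZ0 i ω)] at hω ⊢
        exact hω.le
    _ = ENNReal.ofReal (μ.real {ω | M ≤ Z i ω}) := (ofReal_measureReal).symm
    _ ≤ ENNReal.ofReal ε := ENNReal.ofReal_le_ofReal (le_of_mul_le_mul_left hmarkov hM)

theorem integrable_of_integrable_sq_of_nonneg [IsFiniteMeasure μ] {f : Ω → ℝ}
    (hf0 : ∀ ω, 0 ≤ f ω) (hf : Integrable (fun ω => f ω ^ 2) μ) : Integrable f μ := by
  have hmeas : AEStronglyMeasurable f μ := by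
    have h := Real.continuous_sqrt.comp_aestronglyMeasurable hf.aestronglyMeasurable
    simpa only [Function.comp_def, Real.sqrt_sq (hf0 _)] using h
  exact ((memLp_two_iff_integrable_sq hmeas).2 hf).integrable one_le_two

theorem integral_le_one_add_integral_sq [IsProbabilityMeasure μ] {f : Ω → ℝ}
    (hf : Integrable f μ) (hf2 : Integrable (fun ω => f ω ^ 2) μ) :
    ∫ ω, f ω ∂μ ≤ 1 + ∫ ω, f ω ^ 2 ∂μ := by
  calc ∫ ω, f ω ∂μ ≤ ∫ ω, (1 + f ω ^ 2) ∂μ :=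
        integral_mono hf ((integrable_const 1).add hf2) fun ω => by nlinarith [sq_nonneg (f ω - 1)]
    _ = 1 + ∫ ω, f ω ^ 2 ∂μ := by simp [integral_add (integrable_const 1) hf2]

theorem boundedInProbability_inv_mul_sum_Icc [IsProbabilityMeasure μ] {Y : ℕ → Ω → ℝ} {C : ℝ}
    (hY0 : ∀ m ω, 0 ≤ Y m ω)
    (hY : ∀ m, Integrable (fun ω => Y (m + 1) ω ^ 2) μ ∧ ∫ ω, Y (m + 1) ω ^ 2 ∂μ ≤ C)
    (N k : ι → ℕ) :
    BoundedInProbability μ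
      (fun i ω => (k i : ℝ)⁻¹ * ∑ m ∈ Finset.Icc (N i + 1) (k i), Y m ω) := by
  have hY1 : ∀ m, 1 ≤ m → Integrable (Y m) μ ∧ ∫ ω, Y m ω ∂μ ≤ 1 + C := by
    intro m hm
    obtain ⟨j, rfl⟩ : ∃ j, m = j + 1 := ⟨m - 1, by omega⟩
    have hint := integrable_of_integrable_sq_of_nonneg (hY0 (j + 1)) (hY j).1
    exact ⟨hint, (integral_le_one_add_integral_sq hint (hY j).1).trans (by linarith [(hY j).2])⟩
  have hC : 0 ≤ 1 + C := by
    linarith [(hY 0).2,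
      integral_nonneg (μ := μ) (f := fun ω => Y (0 + 1) ω ^ 2) fun ω => sq_nonneg _]
  refine boundedInProbability_of_integral_le (C := 1 + C) (fun i => ?_)
    (fun i ω => mul_nonneg (by positivity) (Finset.sum_nonneg fun m _ => hY0 m ω)) (fun i => ?_)
  · exact (integrable_finsetSum _ fun m hm => (hY1 m (by simp at hm; omega)).1).const_mul _
  · rw [integral_const_mul, integral_finsetSum _ fun m hm => (hY1 m (by simp at hm; omega)).1]
    calc (k i : ℝ)⁻¹ * ∑ m ∈ Finset.Icc (N i + 1) (k i), ∫ ω, Y m ω ∂μ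
        ≤ (k i : ℝ)⁻¹ * ((k i : ℝ) * (1 + C)) := by
          gcongr
          refine (Finset.sum_le_sum fun m hm => (hY1 m (by simp at hm; omega)).2).trans ?_
          rw [Finset.sum_const, nsmul_eq_mul, Nat.card_Icc]
          gcongr
          exact_mod_cast (by omega : k i + 1 - (N i + 1) ≤ k i)
      _ ≤ 1 + C := by
          rcases eq_or_ne (k i) 0 with h | h
          · simp [h, hC]
          · rw [inv_mul_cancel_left₀ (by exact_mod_cast h)]

theorem tendstoInMeasure_const_of_tendsto {a : ι → ℝ} (ha : Tendsto a l (𝓝 0)) :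
    TendstoInMeasure μ (fun i (_ : Ω) => a i) l 0 := by
  rw [tendstoInMeasure_iff_dist]
  intro ε hε
  refine tendsto_const_nhds.congr' ?_
  filter_upwards [Metric.tendsto_nhds.1 ha ε hε] with i hi
  have hempty : {ω : Ω | ε ≤ dist (a i) ((0 : Ω → ℝ) ω)} = ∅ :=
    Set.eq_empty_of_forall_notMem fun ω hω => (not_le.2 hi) hω
  rw [hempty, measure_empty]

theorem TendstoInMeasure.mul_boundedInProbability {f Z : ι → Ω → ℝ}
    (hf : TendstoInMeasure μ f l 0) (hZ : BoundedInProbability μ Z) :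
    TendstoInMeasure μ (fun i ω => f i ω * Z i ω) l 0 := by
  rw [tendstoInMeasure_iff_dist] at hf ⊢
  intro ε hε
  refine ENNReal.tendsto_nhds_zero.2 fun η hη => ?_
  obtain ⟨r, -, hr0, hrη⟩ := ENNReal.lt_iff_exists_real_btwn.1 hη
  have hr : 0 < r := ENNReal.ofReal_pos.1 hr0
  obtain ⟨C, hC⟩ := hZ (r / 2) (by positivity)
  set C' := max C 1
  have hC' : 0 < C' := lt_max_of_lt_right one_pos
  filter_upwards [ENNReal.tendsto_nhds_zero.1 (hf (ε / C') (by positivity))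
    (ENNReal.ofReal (r / 2)) (by simpa using hr)] with i hi
  calc μ {ω | ε ≤ dist (f i ω * Z i ω) 0}
      ≤ μ ({ω | ε / C' ≤ dist (f i ω) 0} ∪ {ω | C < |Z i ω|}) := measure_mono fun ω hω => by
        simp only [Set.mem_ofPred_eq, Set.mem_union, Real.dist_eq, sub_zero, abs_mul] at hω ⊢
        by_contra! h
        have hZle : |Z i ω| ≤ C' := h.2.trans (le_max_left _ _)
        have : |f i ω| * |Z i ω| < ε := calc
          |f i ω| * |Z i ω| ≤ |f i ω| * C' := by gcongr
          _ < ε := (lt_div_iff₀ hC').1 h.1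
        linarith
    _ ≤ ENNReal.ofReal (r / 2) + ENNReal.ofReal (r / 2) :=
        (measure_union_le _ _).trans (add_le_add hi (hC i))
    _ ≤ η := by rw [← ENNReal.ofReal_add (by positivity) (by positivity), add_halves]; exact hrη.le

theorem TendstoInMeasure.add {E : Type*} [SeminormedAddCommGroup E] {f f' : ι → Ω → E}
    {g g' : Ω → E} (hf : TendstoInMeasure μ f l g) (hf' : TendstoInMeasure μ f' l g') :
    TendstoInMeasure μ (f + f') l (g + g') := by
  rw [tendstoInMeasure_iff_dist] at hf hf' ⊢
  intro ε hε
  have hsum := (hf (ε / 2) (by positivity)).add (hf' (ε / 2) (by positivity))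
  rw [add_zero] at hsum
  refine tendsto_of_tendsto_of_tendsto_of_le_of_le tendsto_const_nhds hsum (fun _ => zero_le)
    fun i => (measure_mono fun ω hω => ?_).trans (measure_union_le _ _)
  simp only [Set.mem_ofPred_eq, Set.mem_union, Pi.add_apply] at hω ⊢
  by_contra! h
  linarith [dist_add_add_le (f i ω) (f' i ω) (g ω) (g' ω)]

theorem TendstoInMeasure.abs {f : ι → Ω → ℝ} (hf : TendstoInMeasure μ f l 0) :
    TendstoInMeasure μ (fun i ω => |f i ω|) l 0 := by
  simpa [tendstoInMeasure_iff_dist, Real.dist_eq] using hf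

theorem tendstoInMeasure_zero_of_abs_le_of_abs_lt {f g h : ι → Ω → ℝ} {r : ℝ}
    (hg : TendstoInMeasure μ g l 0) (hh : TendstoInMeasure μ h l 0) (hr : 0 < r)
    (hfg : ∀ᶠ i in l, ∀ ω, |h i ω| < r → |f i ω| ≤ g i ω) : TendstoInMeasure μ f l 0 := by
  rw [tendstoInMeasure_iff_dist] at hg hh ⊢
  intro ε hε
  have hsum := (hg ε hε).add (hh r hr)
  rw [add_zero] at hsum
  refine tendsto_of_tendsto_of_tendsto_of_le_of_le' tendsto_const_nhds hsum
    (Eventually.of_forall fun _ => zero_le) ?_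
  filter_upwards [hfg] with i hi
  refine (measure_mono fun ω hω => ?_).trans (measure_union_le _ _)
  simp only [Set.mem_ofPred_eq, Set.mem_union, Real.dist_eq, Pi.zero_apply, sub_zero] at hω ⊢
  by_contra! hlt
  linarith [hi ω hlt.2, le_abs_self (g i ω)]

theorem tendstoInMeasure_zero_of_abs_le {f g : ι → Ω → ℝ} (hg : TendstoInMeasure μ g l 0)
    (hfg : ∀ᶠ i in l, ∀ ω, |f i ω| ≤ g i ω) : TendstoInMeasure μ f l 0 :=
  tendstoInMeasure_zero_of_abs_le_of_abs_lt hg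
    (tendstoInMeasure_const_of_tendsto tendsto_const_nhds) one_pos (hfg.mono fun _ hi ω _ => hi ω)

theorem tendstoInMeasure_norm_sub_of_boundedInProbability {E : Type*} [NormedAddCommGroup E]
    [NormedSpace ℝ E] {T : ℕ → Ω → E} {θ : E}
    (hT : BoundedInProbability μ fun (N : ℕ) ω => ‖Real.sqrt N • (T N ω - θ)‖) :
    TendstoInMeasure μ (fun N ω => ‖T N ω - θ‖) atTop 0 := by
  have hinv : Tendsto (fun N : ℕ => (Real.sqrt N)⁻¹) atTop (𝓝 0) :=
    (Real.tendsto_sqrt_atTop.comp tendsto_natCast_atTop_atTop).inv_tendsto_atTop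
  refine ((tendstoInMeasure_const_of_tendsto hinv).mul_boundedInProbability hT).congr'
    ?_ EventuallyEq.rfl
  filter_upwards [eventually_ge_atTop 1] with N hN
  refine Eventually.of_forall fun ω => ?_
  have hsqrt : 0 < Real.sqrt N := Real.sqrt_pos.2 (by exact_mod_cast hN)
  dsimp only
  rw [norm_smul, Real.norm_of_nonneg hsqrt.le, inv_mul_cancel_left₀ hsqrt.ne']

theorem tendstoInMeasure_inv_mul_sum_Icc {Y : ℕ → Ω → ℝ}
    (hY : BoundedInProbability μ
      fun (n : ℕ) ω => (n : ℝ) ^ (-(1 : ℝ) / 2) * ∑ m ∈ Finset.Icc 1 n, Y m ω)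
    {N k : ι → ℕ} (hNk : Tendsto (fun i => Real.sqrt (N i) / k i) l (𝓝 0)) :
    TendstoInMeasure μ (fun i ω => (k i : ℝ)⁻¹ * ∑ m ∈ Finset.Icc 1 (N i), Y m ω) l 0 := by
  refine ((tendstoInMeasure_const_of_tendsto hNk).mul_boundedInProbability
    (hY.comp N)).congr_left fun i => Eventually.of_forall fun ω => ?_
  rcases Nat.eq_zero_or_pos (N i) with h | h
  · simp [h]
  · have hsqrt : 0 < Real.sqrt (N i) := Real.sqrt_pos.2 (by exact_mod_cast h)
    rw [neg_div, Real.rpow_neg (Nat.cast_nonneg _), ← Real.sqrt_eq_rpow]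
    field_simp

theorem tendstoInMeasure_inv_mul_sum_Icc_add {Y : ℕ → Ω → ℝ} {b : ℝ}
    (hY : BoundedInProbability μ
      fun (n : ℕ) ω => (n : ℝ) ^ (-(1 : ℝ) / 2) * ∑ m ∈ Finset.Icc 1 n, (Y m ω + b))
    {N k : ι → ℕ} (hk : Tendsto k l atTop) (hNk : Tendsto (fun i => (N i : ℝ) / k i) l (𝓝 0)) :
    TendstoInMeasure μ
      (fun i ω => (k i : ℝ)⁻¹ * ∑ m ∈ Finset.Icc (N i + 1) (k i), Y m ω + b) l 0 := by
  have hkk : Tendsto (fun i => Real.sqrt (k i) / k i) l (𝓝 0) := by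
    simp only [Real.sqrt_div_self', one_div]
    exact (Real.tendsto_sqrt_atTop.comp (tendsto_natCast_atTop_atTop.comp hk)).inv_tendsto_atTop
  have hsqrtN : Tendsto (fun i => Real.sqrt (N i) / k i) l (𝓝 0) :=
    squeeze_zero (fun i => by positivity) (fun i => div_le_div_of_nonneg_right
      ((Real.sqrt_le_left (Nat.cast_nonneg _)).2 (by exact_mod_cast Nat.le_self_pow two_ne_zero _))
      (Nat.cast_nonneg _)) hNk
  have hb : Tendsto (fun i => (N i : ℝ) / k i * |b|) l (𝓝 0) := by
    simpa using hNk.mul_const |b|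
  have hdom := (((tendstoInMeasure_inv_mul_sum_Icc hY hkk).abs).add
    (tendstoInMeasure_inv_mul_sum_Icc hY hsqrtN).abs).add
    (tendstoInMeasure_const_of_tendsto (μ := μ) hb)
  simp only [add_zero] at hdom
  refine tendstoInMeasure_zero_of_abs_le hdom ?_
  filter_upwards [hNk.eventually (gt_mem_nhds one_pos), hk.eventually_ge_atTop 1] with i hNk1 hk1
  intro ω
  have hkpos : (0 : ℝ) < k i := by exact_mod_cast hk1
  have hNk' : N i ≤ k i := by exact_mod_cast ((div_lt_one hkpos).1 hNk1).le
  rw [inv_mul_sum_Icc_add_eq _ _ hNk' (by omega)]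
  refine (abs_add_le _ _).trans (add_le_add (abs_sub _ _) ?_)
  rw [abs_mul, abs_of_nonneg (by positivity : (0 : ℝ) ≤ N i / k i)]

end MeasureTheory

theorem one_step_MLE_process_matrix_remainder_general
    {d : ℕ} {Ω : Type*} [MeasurableSpace Ω]
    -- the parameter set
    (Θ : Set (Fin d → ℝ)) (hΘopen : IsOpen Θ)
    -- the family of underlying probability measures and the observations
    (P : (Fin d → ℝ) → Measure Ω) (hP : ∀ θ, IsProbabilityMeasure (P θ))
    (X : ℕ → Ω → ℝ)
    -- (R2) preliminary estimator built from the learning interval, uniformly √N-tight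
    (θbar : ℕ → Ω → (Fin d → ℝ))
    (hR2 : ∀ K ⊆ Θ, IsCompact K → ∀ ε > (0 : ℝ), ∃ C > (0 : ℝ), ∀ N : ℕ, ∀ θ ∈ K,
      P θ {ω | C < ‖Real.sqrt N • (θbar N ω - θ)‖} ≤ ENNReal.ofReal ε)
    -- (R3) smoothness: `ℓdot`, `ℓddot`, `ℓdddot` are the θ-derivatives of
    -- `ℓ(θ,x,x') = log g(x' − S(θ,x))` of orders 1, 2, 3, majorized in square mean
    (ℓddot : (Fin d → ℝ) → ℝ → ℝ → Matrix (Fin d) (Fin d) ℝ)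
    (ℓdddot : (Fin d → ℝ) → ℝ → ℝ → Fin d → Fin d → Fin d → ℝ)
    (hℓdddot : ∀ θ ∈ Θ, ∀ x x' : ℝ, ∀ i j : Fin d,
      HasFDerivAt (fun ϑ => ℓddot ϑ x x' i j) (covec (ℓdddot θ x x' i j)) θ)
    (R₁ R₂ R₃ : ℝ → ℝ → ℝ)
    (hmaj3 : ∀ θ ∈ Θ, ∀ x x' : ℝ, ∀ i j : Fin d, ‖ℓdddot θ x x' i j‖ ≤ R₃ x x')
    (hRmom : ∃ C > (0 : ℝ), ∀ θ ∈ Θ, ∀ j : ℕ, ∀ R ∈ ({R₁, R₂, R₃} : Set (ℝ → ℝ → ℝ)),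
      Integrable (fun ω => (R (X j ω) (X (j + 1) ω)) ^ 2) (P θ) ∧
      ∫ ω, (R (X j ω) (X (j + 1) ω)) ^ 2 ∂(P θ) ≤ C)
    -- the Fisher information matrix
    (Info : (Fin d → ℝ) → Matrix (Fin d) (Fin d) ℝ)
    -- (R4) law of large numbers, central limit theorem, uniform tightness
    (hR4tight : ∀ K ⊆ Θ, IsCompact K → ∀ ε > (0 : ℝ), ∃ C > (0 : ℝ),
      ∀ n : ℕ, ∀ θ ∈ K, ∀ i j : Fin d,
      P θ {ω | C < |((n : ℝ) ^ (-(1 : ℝ) / 2)) *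
        ∑ m ∈ Finset.Icc 1 n, (ℓddot θ (X (m - 1) ω) (X m ω) i j + Info θ i j)|}
        ≤ ENNReal.ofReal ε)
    -- (R5) Lipschitz continuity and uniform nondegeneracy of the Fisher information
    (hLip : ∃ L : ℝ, ∀ θ₁ ∈ Θ, ∀ θ₂ ∈ Θ, ∀ i j : Fin d,
      |Info θ₁ i j - Info θ₂ i j| ≤ L * ‖θ₁ - θ₂‖)
    -- the learning interval `N = ⌊n^δ⌋`, `1/2 < δ < 1`
    (δ : ℝ) (hδ : δ ∈ Set.Ioo (1 / 2 : ℝ) 1) :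
    ∀ s ∈ Set.Ioc (0 : ℝ) 1, ∀ θ ∈ Θ, ∀ i j : Fin d,
      TendstoInMeasure (P θ)
        (fun (n : ℕ) ω =>
          Info (θbar ⌊(n : ℝ) ^ δ⌋₊ ω) i j +
            ∫ v in (0 : ℝ)..1, ((⌊s * (n : ℝ)⌋₊ : ℝ))⁻¹ *
              ∑ m ∈ Finset.Icc (⌊(n : ℝ) ^ δ⌋₊ + 1) ⌊s * (n : ℝ)⌋₊,
                ℓddot (θ + v • (θbar ⌊(n : ℝ) ^ δ⌋₊ ω - θ)) (X (m - 1) ω) (X m ω) i j)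
        atTop (fun _ => 0) := by
  intro s hs θ hθ i j
  have := hP θ
  obtain ⟨L, hL⟩ := hLip
  obtain ⟨CR, -, hCR⟩ := hRmom
  obtain ⟨r, hr, hball⟩ := Metric.isOpen_iff.mp hΘopen θ hθ
  have hk : Tendsto (fun n : ℕ => ⌊s * n⌋₊) atTop atTop := tendsto_nat_floor_atTop.comp
    (tendsto_natCast_atTop_atTop.const_mul_atTop hs.1)
  have hN : Tendsto (fun n : ℕ => ⌊(n : ℝ) ^ δ⌋₊) atTop atTop := tendsto_nat_floor_atTop.comp
    ((tendsto_rpow_atTop (by linarith [hδ.1])).comp tendsto_natCast_atTop_atTop)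
  have hθbar := (tendstoInMeasure_norm_sub_of_boundedInProbability (μ := P θ) (T := θbar)
    fun ε hε => (hR2 {θ} (by simpa) isCompact_singleton ε hε).imp fun C hC N => by
      simpa only [abs_norm] using hC.2 N θ rfl).comp hN
  have hlin := tendstoInMeasure_inv_mul_sum_Icc_add
    (fun ε hε => (hR4tight {θ} (by simpa) isCompact_singleton ε hε).imp fun C hC n =>
      hC.2 n θ rfl i j) hk (tendsto_natFloor_rpow_div_natFloor_mul hδ.2 hs.1)
  have hR₃ := (boundedInProbability_inv_mul_sum_Icc (μ := P θ)
    (Y := fun m ω => R₃ (X (m - 1) ω) (X m ω))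
    (fun m ω => (norm_nonneg _).trans (hmaj3 θ hθ _ _ i j)) (fun m => hCR θ hθ m R₃ (by simp))
    (fun n : ℕ => ⌊(n : ℝ) ^ δ⌋₊) (fun n : ℕ => ⌊s * n⌋₊)).const_add_mul |L| d
  have hdom := (hθbar.mul_boundedInProbability hR₃).add hlin.abs
  rw [add_zero] at hdom
  refine tendstoInMeasure_zero_of_abs_le_of_abs_lt hdom hθbar hr (Eventually.of_forall
    fun n ω hω => ?_)
  replace hω : θbar ⌊(n : ℝ) ^ δ⌋₊ ω ∈ Metric.ball θ r := by simpa [dist_eq_norm] using hω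
  exact abs_add_integral_avg_segment_le (I := fun ϑ => Info ϑ i j)
    (F := fun ϑ m => ℓddot ϑ (X (m - 1) ω) (X m ω) i j) (convex_ball θ r)
    (fun ϑ hϑ m => hℓdddot ϑ (hball hϑ) _ _ i j) (fun ϑ hϑ m => hmaj3 ϑ (hball hϑ) _ _ i j)
    (Metric.mem_ball_self hr) hω (hL _ (hball hω) θ hθ i j) _ _

/-- Under Conditions R, for every `s ∈ (0,1]` and `θ ∈ Θ`, the matrix
`B_n = I(θ̄_N) + k^{-1/2} ∫_0^1 Δ̇_k(θ + v(θ̄_N − θ), X^k_N) dv` converges to `0` in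
`P θ`-probability, where `k = ⌊sn⌋` and `N = ⌊n^δ⌋`. -/
theorem one_step_MLE_process_matrix_remainder
    {d : ℕ} {Ω : Type*} [MeasurableSpace Ω]
    -- the parameter set
    (Θ : Set (Fin d → ℝ)) (hΘopen : IsOpen Θ) (hΘbdd : Bornology.IsBounded Θ)
    (hΘconv : Convex ℝ Θ)
    -- the family of underlying probability measures and the observations
    (P : (Fin d → ℝ) → Measure Ω) (hP : ∀ θ, IsProbabilityMeasure (P θ))
    (X : ℕ → Ω → ℝ) (hX : ∀ j, Measurable (X j))
    -- the model: nonlinear autoregression with trend `S` and noise density `g`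
    (S : (Fin d → ℝ) → ℝ → ℝ) (g : ℝ → ℝ) (hgpos : ∀ x, 0 < g x)
    (hnoise_law : ∀ θ ∈ Θ, ∀ j : ℕ,
      Measure.map (fun ω => X (j + 1) ω - S θ (X j ω)) (P θ)
        = volume.withDensity fun x => ENNReal.ofReal (g x))
    (hnoise_indep : ∀ θ ∈ Θ, ∀ j : ℕ,
      Indep (MeasurableSpace.comap (fun ω => X (j + 1) ω - S θ (X j ω)) inferInstance)
        (⨆ i ∈ Finset.range (j + 1), MeasurableSpace.comap (X i) inferInstance) (P θ))
    -- (R1) strict stationarity with unique invariant density `π`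
    (π : (Fin d → ℝ) → ℝ → ℝ)
    (hstat : ∀ θ ∈ Θ, ∀ m j : ℕ,
      Measure.map (fun ω (i : Fin m) => X (j + i) ω) (P θ)
        = Measure.map (fun ω (i : Fin m) => X i ω) (P θ))
    (hinv_dens : ∀ θ ∈ Θ,
      Measure.map (X 0) (P θ) = volume.withDensity fun x => ENNReal.ofReal (π θ x))
    (hinv_uniq : ∀ θ ∈ Θ, ∀ μ : Measure ℝ, IsProbabilityMeasure μ →
      (μ.bind fun x => volume.withDensity fun y => ENNReal.ofReal (g (y - S θ x))) = μ →
      μ = volume.withDensity fun x => ENNReal.ofReal (π θ x))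
    -- (R2) preliminary estimator built from the learning interval, uniformly √N-tight
    (θbar : ℕ → Ω → (Fin d → ℝ))
    (hbar_adapted : ∀ N : ℕ, @Measurable Ω (Fin d → ℝ)
      (MeasurableSpace.comap (fun ω (i : Fin (N + 1)) => X i ω) inferInstance) _ (θbar N))
    (hR2 : ∀ K ⊆ Θ, IsCompact K → ∀ ε > (0 : ℝ), ∃ C > (0 : ℝ), ∀ N : ℕ, ∀ θ ∈ K,
      P θ {ω | C < ‖Real.sqrt N • (θbar N ω - θ)‖} ≤ ENNReal.ofReal ε)
    -- (R3) smoothness: `ℓdot`, `ℓddot`, `ℓdddot` are the θ-derivatives of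
    -- `ℓ(θ,x,x') = log g(x' − S(θ,x))` of orders 1, 2, 3, majorized in square mean
    (hgC3 : ContDiff ℝ 3 g) (hSC3 : ∀ x : ℝ, ContDiffOn ℝ 3 (fun ϑ => S ϑ x) Θ)
    (ℓdot : (Fin d → ℝ) → ℝ → ℝ → (Fin d → ℝ))
    (ℓddot : (Fin d → ℝ) → ℝ → ℝ → Matrix (Fin d) (Fin d) ℝ)
    (ℓdddot : (Fin d → ℝ) → ℝ → ℝ → Fin d → Fin d → Fin d → ℝ)
    (hℓdot : ∀ θ ∈ Θ, ∀ x x' : ℝ,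
      HasFDerivAt (fun ϑ => Real.log (g (x' - S ϑ x))) (covec (ℓdot θ x x')) θ)
    (hℓddot : ∀ θ ∈ Θ, ∀ x x' : ℝ, ∀ i : Fin d,
      HasFDerivAt (fun ϑ => ℓdot ϑ x x' i) (covec (ℓddot θ x x' i)) θ)
    (hℓdddot : ∀ θ ∈ Θ, ∀ x x' : ℝ, ∀ i j : Fin d,
      HasFDerivAt (fun ϑ => ℓddot ϑ x x' i j) (covec (ℓdddot θ x x' i j)) θ)
    (R₁ R₂ R₃ : ℝ → ℝ → ℝ)
    (hmaj1 : ∀ θ ∈ Θ, ∀ x x' : ℝ, ‖ℓdot θ x x'‖ ≤ R₁ x x')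
    (hmaj2 : ∀ θ ∈ Θ, ∀ x x' : ℝ, ∀ i : Fin d, ‖ℓddot θ x x' i‖ ≤ R₂ x x')
    (hmaj3 : ∀ θ ∈ Θ, ∀ x x' : ℝ, ∀ i j : Fin d, ‖ℓdddot θ x x' i j‖ ≤ R₃ x x')
    (hRmom : ∃ C > (0 : ℝ), ∀ θ ∈ Θ, ∀ j : ℕ, ∀ R ∈ ({R₁, R₂, R₃} : Set (ℝ → ℝ → ℝ)),
      Integrable (fun ω => (R (X j ω) (X (j + 1) ω)) ^ 2) (P θ) ∧
      ∫ ω, (R (X j ω) (X (j + 1) ω)) ^ 2 ∂(P θ) ≤ C)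
    -- the Fisher information matrix
    (Info : (Fin d → ℝ) → Matrix (Fin d) (Fin d) ℝ)
    (hInfo : ∀ θ ∈ Θ, ∀ i j : Fin d, Info θ i j
      = ∫ ω, ℓdot θ (X 0 ω) (X 1 ω) i * ℓdot θ (X 0 ω) (X 1 ω) j ∂(P θ))
    -- (R4) law of large numbers, central limit theorem, uniform tightness
    (hLLN : ∀ θ ∈ Θ, ∀ i j : Fin d, TendstoInMeasure (P θ)
      (fun (n : ℕ) ω => (1 / (n : ℝ)) *
        ∑ m ∈ Finset.Icc 1 n, ℓdot θ (X (m - 1) ω) (X m ω) i * ℓdot θ (X (m - 1) ω) (X m ω) j)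
      atTop (fun _ => Info θ i j))
    (hCLT : ∀ θ ∈ Θ, WeakLim (P θ)
      (fun (n : ℕ) ω => ((n : ℝ) ^ (-(1 : ℝ) / 2)) •
        ∑ m ∈ Finset.Icc 1 n, ℓdot θ (X (m - 1) ω) (X m ω))
      (gaussianVec (Info θ)))
    (hR4tight : ∀ K ⊆ Θ, IsCompact K → ∀ ε > (0 : ℝ), ∃ C > (0 : ℝ),
      ∀ n : ℕ, ∀ θ ∈ K, ∀ i j : Fin d,
      P θ {ω | C < |((n : ℝ) ^ (-(1 : ℝ) / 2)) *
        ∑ m ∈ Finset.Icc 1 n, (ℓddot θ (X (m - 1) ω) (X m ω) i j + Info θ i j)|}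
        ≤ ENNReal.ofReal ε)
    -- (R5) Lipschitz continuity and uniform nondegeneracy of the Fisher information
    (hLip : ∃ L : ℝ, ∀ θ₁ ∈ Θ, ∀ θ₂ ∈ Θ, ∀ i j : Fin d,
      |Info θ₁ i j - Info θ₂ i j| ≤ L * ‖θ₁ - θ₂‖)
    (hnondeg : ∃ c > (0 : ℝ), ∃ Cu : ℝ, ∀ θ ∈ Θ, ∀ lam : Fin d → ℝ, ‖lam‖ = 1 →
      c ≤ lam ⬝ᵥ (Info θ).mulVec lam ∧ lam ⬝ᵥ (Info θ).mulVec lam ≤ Cu)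
    -- the learning interval `N = ⌊n^δ⌋`, `1/2 < δ < 1`
    (δ : ℝ) (hδ : δ ∈ Set.Ioo (1 / 2 : ℝ) 1) :
    ∀ s ∈ Set.Ioc (0 : ℝ) 1, ∀ θ ∈ Θ, ∀ i j : Fin d,
      TendstoInMeasure (P θ)
        (fun (n : ℕ) ω =>
          Info (θbar ⌊(n : ℝ) ^ δ⌋₊ ω) i j +
            ∫ v in (0 : ℝ)..1, ((⌊s * (n : ℝ)⌋₊ : ℝ))⁻¹ *
              ∑ m ∈ Finset.Icc (⌊(n : ℝ) ^ δ⌋₊ + 1) ⌊s * (n : ℝ)⌋₊,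
                ℓddot (θ + v • (θbar ⌊(n : ℝ) ^ δ⌋₊ ω - θ)) (X (m - 1) ω) (X m ω) i j)
        atTop (fun _ => 0) :=
  one_step_MLE_process_matrix_remainder_general Θ hΘopen P hP X θbar hR2 ℓddot ℓdddot hℓdddot R₁ R₂
    R₃ hmaj3 hRmom Info hR4tight hLip δ hδ
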